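/- arXiv:math/0601349 — 4 statements merged into one kernel-verified Lean document; each statement's English description precedes it below -/
import Mathlib

section
/- Let S be a positivity-preserving (Markovian) self-adjoint semigroup on L_2(X) for a σ-finite measure space X. Let A, B be measurable subsets of X with finite measure, with indicator functions 𝟙_A, 𝟙_B. If (S_t 𝟙_A, 𝟙_B) = 0 for one t > 0, then (S_t 𝟙_A, 𝟙_B) = 0 for all t > 0. -/
/-!
For nonnegative `u, v ∈ L²` the pairing `⟪u, v⟫` vanishes iff `u ⊓ v = 0`. Writing
`⟪S_t a, b⟫ = ⟪S_{t/2} a, S_{t/2} b⟫`, vanishing at `t₀` therefore means that `S_{α+ε} a` and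
`S_{β+ε} b` are disjoint; positivity then makes `S_ε (S_α a ⊓ S_β b)` vanish, and self-adjointness
forces `S_α a ⊓ S_β b = 0`. Hence the pairing vanishes on `(t₀/2, t₀)`, and the identity theorem
for its analytic extension to the right half-plane propagates this to every `t > 0`.
-/

open MeasureTheory Filter Topology Set

theorem mul_eq_zero_iff_min_eq_zero_of_nonneg {α : Type*} [MulZeroClass α] [NoZeroDivisors α]
    [LinearOrder α] {a b : α} (ha : 0 ≤ a) (hb : 0 ≤ b) : a * b = 0 ↔ min a b = 0 := by
  rw [mul_eq_zero]
  rcases le_total a b with h | h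
  · rw [min_eq_left h]; exact ⟨fun h0 => h0.elim id fun hb0 => le_antisymm (hb0 ▸ h) ha, Or.inl⟩
  · rw [min_eq_right h]; exact ⟨fun h0 => h0.elim (fun ha0 => le_antisymm (ha0 ▸ h) hb) id, Or.inr⟩

namespace MeasureTheory.Lp

variable {X : Type*} [MeasurableSpace X] {μ : Measure X}

theorem inner_eq_integral_mul (u v : Lp ℝ 2 μ) :
    inner (𝕜 := ℝ) u v = ∫ x, u x * v x ∂μ := by
  simp only [L2.inner_def, Real.inner_apply]

theorem inner_eq_zero_iff_inf_eq_zero {u v : Lp ℝ 2 μ} (hu : 0 ≤ u) (hv : 0 ≤ v) :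
    inner (𝕜 := ℝ) u v = 0 ↔ u ⊓ v = 0 := by
  have hu' := (coeFn_nonneg u).2 hu
  have hv' := (coeFn_nonneg v).2 hv
  have hint : Integrable (fun x => u x * v x) μ := by
    simpa only [Real.inner_apply, mul_comm] using L2.integrable_inner (𝕜 := ℝ) u v
  rw [inner_eq_integral_mul, integral_eq_zero_iff_of_nonneg_ae
    (by filter_upwards [hu', hv'] with x h1 h2 using mul_nonneg h1 h2) hint,
    eq_zero_iff_ae_eq_zero]
  refine eventually_congr ?_
  filter_upwards [coeFn_inf u v, hu', hv'] with x hx h1 h2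
  rw [hx, Pi.inf_apply]
  exact mul_eq_zero_iff_min_eq_zero_of_nonneg h1 h2

theorem eq_zero_of_le_of_inner_eq_zero {u v : Lp ℝ 2 μ} (hu : 0 ≤ u) (huv : u ≤ v)
    (h : inner (𝕜 := ℝ) u v = 0) : u = 0 := by
  rw [← inf_eq_left.2 huv]
  exact (inner_eq_zero_iff_inf_eq_zero hu (hu.trans huv)).1 h

theorem indicatorConstLp_nonneg {s : Set X} (hs : MeasurableSet s) (hμs : μ s ≠ ⊤) {c : ℝ}
    (hc : 0 ≤ c) : 0 ≤ indicatorConstLp 2 hs hμs c := by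
  rw [← coeFn_nonneg]
  filter_upwards [indicatorConstLp_coeFn (p := 2) (hs := hs) (hμs := hμs) (c := c)] with x hx
  rw [hx]
  exact Set.indicator_nonneg (fun _ _ => hc) x

end MeasureTheory.Lp

theorem DifferentiableOn.eqOn_zero_of_eq_zero_on_Ioo {F : ℂ → ℂ}
    (hF : DifferentiableOn ℂ F {z : ℂ | 0 < z.re}) {a b : ℝ} (ha : 0 ≤ a) (hab : a < b)
    (h : ∀ t ∈ Ioo a b, F t = 0) : EqOn F 0 {z : ℂ | 0 < z.re} := by
  have hopen : IsOpen {z : ℂ | 0 < z.re} := isOpen_lt continuous_const Complex.continuous_re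
  have hc : (a + b) / 2 ∈ Ioo a b := ⟨by linarith, by linarith⟩
  have hfreq : ∃ᶠ t : ℝ in 𝓝[≠] ((a + b) / 2), F t = 0 :=
    (eventually_nhdsWithin_of_eventually_nhds (isOpen_Ioo.mem_nhds hc) |>.mono h).frequently
  have hmaps : Tendsto ((↑) : ℝ → ℂ) (𝓝[≠] ((a + b) / 2)) (𝓝[≠] (((a + b) / 2 : ℝ) : ℂ)) :=
    Complex.continuous_ofReal.continuousWithinAt.tendsto_nhdsWithin fun _ ht => Complex.ofReal_injective.ne ht
  exact (hF.analyticOnNhd hopen).eqOn_zero_of_preconnected_of_frequently_eq_zero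
    (convex_halfSpace_re_gt 0).isPreconnected 
    (show 0 < (((a + b) / 2 : ℝ) : ℂ).re by rw [Complex.ofReal_re]; linarith)
    (hmaps.frequently hfreq)

section PositiveSemigroup

variable {X : Type*} [MeasurableSpace X] {μ : Measure X}

theorem inf_eq_zero_of_semigroup_inf_eq_zero (S : ℝ → Lp ℝ 2 μ →L[ℝ] Lp ℝ 2 μ)
    (hsemi : ∀ s : ℝ, 0 < s → ∀ t : ℝ, 0 < t → S (s + t) = (S s).comp (S t))
    (hsa : ∀ t : ℝ, 0 < t → ∀ f g : Lp ℝ 2 μ,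
      inner (𝕜 := ℝ) (S t f) g = inner (𝕜 := ℝ) f (S t g))
    (hpos : ∀ t : ℝ, 0 < t → ∀ f : Lp ℝ 2 μ, 0 ≤ f → 0 ≤ S t f)
    {u v : Lp ℝ 2 μ} (hu : 0 ≤ u) (hv : 0 ≤ v) {β ε : ℝ} (hε : 0 < ε) (hεβ : ε < β)
    (h : S ε u ⊓ S (β + ε) v = 0) : u ⊓ S β v = 0 := by
  have hβ : 0 < β := hε.trans hεβ
  set x := u ⊓ S β v
  have hx : 0 ≤ x := le_inf hu (hpos β hβ v hv)
  have hSεx : S ε x = 0 := by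
    refine le_antisymm ?_ (hpos ε hε x hx)
    have hmono := (monotone_iff_map_nonneg (S ε)).2 (hpos ε hε)
    rw [← h, add_comm, hsemi ε hε β hβ]
    exact le_inf (hmono inf_le_left) (hmono inf_le_right)
  have hSβx : S β x = 0 := by
    rw [show β = β - ε + ε by ring, hsemi _ (by linarith) ε hε, ContinuousLinearMap.comp_apply,
      hSεx, map_zero]
  refine Lp.eq_zero_of_le_of_inner_eq_zero hx inf_le_right ?_
  rw [← hsa β hβ, hSβx, inner_zero_left]

theorem inner_semigroup_eq_zero_of_lt_of_lt_two_mul (S : ℝ → Lp ℝ 2 μ →L[ℝ] Lp ℝ 2 μ)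
    (hsemi : ∀ s : ℝ, 0 < s → ∀ t : ℝ, 0 < t → S (s + t) = (S s).comp (S t))
    (hsa : ∀ t : ℝ, 0 < t → ∀ f g : Lp ℝ 2 μ,
      inner (𝕜 := ℝ) (S t f) g = inner (𝕜 := ℝ) f (S t g))
    (hpos : ∀ t : ℝ, 0 < t → ∀ f : Lp ℝ 2 μ, 0 ≤ f → 0 ≤ S t f)
    {a b : Lp ℝ 2 μ} (ha : 0 ≤ a) (hb : 0 ≤ b) {r t : ℝ} (hr : 0 < r) (hrt : r < t)
    (htr : t < 2 * r) (h : inner (𝕜 := ℝ) (S t a) b = 0) : inner (𝕜 := ℝ) (S r a) b = 0 := by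
  have hsplit : ∀ s t : ℝ, 0 < s → 0 < t →
      inner (𝕜 := ℝ) (S (s + t) a) b = inner (𝕜 := ℝ) (S s a) (S t b) := by
    intro s t hs ht
    rw [add_comm, hsemi t ht s hs, ContinuousLinearMap.comp_apply, hsa t ht]
  set ε := (t - r) / 2 with hε_def
  have hε : 0 < ε := by linarith
  have hSa := hpos (r / 2) (by linarith) a ha
  have hdisj : S ε (S (r / 2) a) ⊓ S (r / 2 + ε) b = 0 := by
    rw [← ContinuousLinearMap.comp_apply, ← hsemi ε hε _ (by linarith),
      ← Lp.inner_eq_zero_iff_inf_eq_zero (hpos _ (by linarith) a ha) (hpos _ (by linarith) b hb),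
      ← hsplit _ _ (by linarith) (by linarith), show ε + r / 2 + (r / 2 + ε) = t by linarith]
    exact h
  rw [← add_halves r, hsplit _ _ (by linarith) (by linarith),
    Lp.inner_eq_zero_iff_inf_eq_zero hSa (hpos _ (by linarith) b hb)]
  exact inf_eq_zero_of_semigroup_inf_eq_zero S hsemi hsa hpos hSa hb hε (by linarith) hdisj

end PositiveSemigroup

theorem semigroup_indicator_inner_zero_general {X : Type*} [MeasurableSpace X]
    (μ : Measure X)
    (S : ℝ → Lp ℝ 2 μ →L[ℝ] Lp ℝ 2 μ)
    (hsemi : ∀ s : ℝ, 0 < s → ∀ t : ℝ, 0 < t → S (s + t) = (S s).comp (S t))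
    (hsa : ∀ t : ℝ, 0 < t → ∀ f g : Lp ℝ 2 μ,
      inner (𝕜 := ℝ) (S t f) g = inner (𝕜 := ℝ) f (S t g))
    (hpos : ∀ t : ℝ, 0 < t → ∀ f : Lp ℝ 2 μ, 0 ≤ f → 0 ≤ S t f)
    (A B : Set X) (hA : MeasurableSet A) (hB : MeasurableSet B)
    (hAfin : μ A ≠ ⊤) (hBfin : μ B ≠ ⊤)
    (F : ℂ → ℂ)
    (hF : DifferentiableOn ℂ F {z : ℂ | 0 < z.re})
    (hFt : ∀ t : ℝ, 0 < t →
      F t = (inner (𝕜 := ℝ) (S t (indicatorConstLp 2 hA hAfin (1 : ℝ)))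
        (indicatorConstLp 2 hB hBfin (1 : ℝ)) : ℝ))
    (t₀ : ℝ) (ht₀ : 0 < t₀)
    (h0 : inner (𝕜 := ℝ) (S t₀ (indicatorConstLp 2 hA hAfin (1 : ℝ)))
      (indicatorConstLp 2 hB hBfin (1 : ℝ)) = (0 : ℝ)) :
    ∀ t : ℝ, 0 < t →
      inner (𝕜 := ℝ) (S t (indicatorConstLp 2 hA hAfin (1 : ℝ)))
        (indicatorConstLp 2 hB hBfin (1 : ℝ)) = (0 : ℝ) := by
  have hIoo : ∀ r ∈ Ioo (t₀ / 2) t₀, F r = 0 := fun r ⟨hr, hrt⟩ => by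
    rw [hFt r (by linarith), inner_semigroup_eq_zero_of_lt_of_lt_two_mul S hsemi hsa hpos
      (Lp.indicatorConstLp_nonneg hA hAfin zero_le_one)
      (Lp.indicatorConstLp_nonneg hB hBfin zero_le_one) (by linarith) hrt (by linarith) h0,
      Complex.ofReal_zero]
  intro t ht
  have hFt_zero : F t = 0 := hF.eqOn_zero_of_eq_zero_on_Ioo (by linarith) (by linarith) hIoo
    (show 0 < (t : ℂ).re from ht)
  exact_mod_cast (hFt t ht).symm.trans hFt_zero

/-- Let `S` be a positivity-preserving self-adjoint semigroup on `L₂(X)` over a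
σ-finite measure space, such that `z ↦ (S_z 𝟙_A, 𝟙_B)` extends analytically to the
open right half-plane (as it does for `S_t = e^{-tH}` with `H` positive self-adjoint).
If `A, B` have finite measure and `(S_t 𝟙_A, 𝟙_B) = 0` for one `t > 0`, then
`(S_t 𝟙_A, 𝟙_B) = 0` for all `t > 0`. -/
theorem semigroup_indicator_inner_zero {X : Type*} [MeasurableSpace X]
    (μ : Measure X) [SigmaFinite μ]
    (S : ℝ → Lp ℝ 2 μ →L[ℝ] Lp ℝ 2 μ)
    (hsemi : ∀ s : ℝ, 0 < s → ∀ t : ℝ, 0 < t → S (s + t) = (S s).comp (S t))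
    (hsa : ∀ t : ℝ, 0 < t → ∀ f g : Lp ℝ 2 μ,
      inner (𝕜 := ℝ) (S t f) g = inner (𝕜 := ℝ) f (S t g))
    (hpos : ∀ t : ℝ, 0 < t → ∀ f : Lp ℝ 2 μ, 0 ≤ f → 0 ≤ S t f)
    (A B : Set X) (hA : MeasurableSet A) (hB : MeasurableSet B)
    (hAfin : μ A ≠ ⊤) (hBfin : μ B ≠ ⊤)
    (F : ℂ → ℂ)
    (hF : DifferentiableOn ℂ F {z : ℂ | 0 < z.re})
    (hFt : ∀ t : ℝ, 0 < t →
      F t = (inner (𝕜 := ℝ) (S t (indicatorConstLp 2 hA hAfin (1 : ℝ)))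
        (indicatorConstLp 2 hB hBfin (1 : ℝ)) : ℝ))
    (t₀ : ℝ) (ht₀ : 0 < t₀)
    (h0 : inner (𝕜 := ℝ) (S t₀ (indicatorConstLp 2 hA hAfin (1 : ℝ)))
      (indicatorConstLp 2 hB hBfin (1 : ℝ)) = (0 : ℝ)) :
    ∀ t : ℝ, 0 < t →
      inner (𝕜 := ℝ) (S t (indicatorConstLp 2 hA hAfin (1 : ℝ)))
        (indicatorConstLp 2 hB hBfin (1 : ℝ)) = (0 : ℝ) :=
  semigroup_indicator_inner_zero_general μ S hsemi hsa hpos A B hA hB hAfin hBfin F hF hFt t₀ ht₀ h0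
end

section
/- For every d ∈ ℕ there exists c' > 0 such that Σ_{n=2}^∞ n^{d/2} e^{-α n²} ≤ c' α^{-(d+2)/4} e^{-α} uniformly for all α > 0. -/
/-!
Since `n² ≥ 2` for `n ≥ 2`, half of the Gaussian factor pays for `e^{-α}`:
`e^{-α n²} ≤ e^{-α} e^{-(α/2) n²}`. On `[n - 1, n]` one has `x ≥ n / 2`, so
`n^s e^{-β n²} ≤ 2^s ∫_{n-1}^{n} x^s e^{-β x²} dx`, and the sum is dominated by
`2^s ∫_0^∞ x^s e^{-β x²} dx = 2^s β^{-(s+1)/2} Γ((s+1)/2) / 2` with `β = α / 2`.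
-/

open MeasureTheory Set Real

theorem exp_neg_mul_sq_le_exp_neg_mul_exp {α x : ℝ} (hα : 0 ≤ α) (hx : 2 ≤ x ^ 2) :
    exp (-α * x ^ 2) ≤ exp (-α) * exp (-(α / 2) * x ^ 2) := by
  rw [← exp_add, exp_le_exp]
  nlinarith

theorem rpow_mul_exp_neg_mul_sq_le_two_rpow_mul_integral {s β t : ℝ} (hs : 0 ≤ s) (hβ : 0 ≤ β)
    (ht : 1 ≤ t) :
    (t + 1) ^ s * exp (-β * (t + 1) ^ 2) ≤ 2 ^ s * ∫ x in t..t + 1, x ^ s * exp (-β * x ^ 2) := by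
  have hcont : Continuous fun x : ℝ => x ^ s * exp (-β * x ^ 2) := by
    fun_prop (disch := exact hs)
  have hlower : ∀ x ∈ Icc t (t + 1),
      ((t + 1) / 2) ^ s * exp (-β * (t + 1) ^ 2) ≤ x ^ s * exp (-β * x ^ 2) := by
    rintro x ⟨htx, hxt⟩
    have hx : (t + 1) / 2 ≤ x := by linarith
    have hexp : exp (-β * (t + 1) ^ 2) ≤ exp (-β * x ^ 2) := by
      rw [exp_le_exp]
      nlinarith [mul_nonneg hβ (by linarith : 0 ≤ t + 1 - x)]
    exact mul_le_mul (rpow_le_rpow (by linarith) hx hs) hexp (exp_pos _).le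
      (rpow_nonneg (by linarith) _)
  calc (t + 1) ^ s * exp (-β * (t + 1) ^ 2)
      = 2 ^ s * (((t + 1) / 2) ^ s * exp (-β * (t + 1) ^ 2)) := by
        rw [← mul_assoc, ← mul_rpow (by norm_num) (by linarith)]
        ring_nf
    _ = 2 ^ s * ∫ _ in t..t + 1, ((t + 1) / 2) ^ s * exp (-β * (t + 1) ^ 2) := by simp
    _ ≤ 2 ^ s * ∫ x in t..t + 1, x ^ s * exp (-β * x ^ 2) := by
        gcongr
        exact intervalIntegral.integral_mono_on (by linarith) intervalIntegrable_const
          (hcont.intervalIntegrable _ _) hlower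

theorem sum_range_intervalIntegral_le_integral_Ioi {f : ℝ → ℝ} {a b : ℝ} (hba : b ≤ a)
    (hf : IntegrableOn f (Ioi b)) (hf0 : ∀ x ∈ Ioi b, 0 ≤ f x) (N : ℕ) :
    ∑ n ∈ Finset.range N, ∫ x in a + n..a + n + 1, f x ≤ ∫ x in Ioi b, f x := by
  have hadjacent := intervalIntegral.sum_integral_adjacent_intervals (f := f) (μ := volume)
    (a := fun n : ℕ => a + n) (n := N) fun k _ =>
      (intervalIntegrable_iff_integrableOn_Ioc_of_le (by simp)).2 (hf.mono_set fun x hx =>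
        (hba.trans (le_add_of_nonneg_right k.cast_nonneg)).trans_lt hx.1)
  simp only [Nat.cast_add, Nat.cast_one, ← add_assoc, Nat.cast_zero, add_zero] at hadjacent
  rw [hadjacent, intervalIntegral.integral_of_le (by simp)]
  exact setIntegral_mono_set hf ((ae_restrict_iff' measurableSet_Ioi).2 (ae_of_all _ hf0))
    (LE.le.eventuallyLE fun x hx => hba.trans_lt hx.1)

theorem tsum_rpow_mul_exp_neg_mul_sq_le {s α : ℝ} (hs : 0 ≤ s) (hα : 0 < α) :
    ∑' n : ℕ, ((n : ℝ) + 2) ^ s * exp (-α * (n + 2) ^ 2)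
      ≤ exp (-α) * (2 ^ s * ∫ x in Ioi 0, x ^ s * exp (-(α / 2) * x ^ 2)) := by
  refine tsum_le_of_sum_range_le (fun n => by positivity) fun N => ?_
  have hterm (n : ℕ) : ((n : ℝ) + 2) ^ s * exp (-α * (n + 2) ^ 2)
      ≤ exp (-α) * (2 ^ s * ∫ x in 1 + n..1 + n + 1, x ^ s * exp (-(α / 2) * x ^ 2)) := by
    have hsplit := exp_neg_mul_sq_le_exp_neg_mul_exp hα.le
      (show 2 ≤ ((n : ℝ) + 2) ^ 2 by nlinarith [n.cast_nonneg (α := ℝ)])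
    have hcompare : ((n : ℝ) + 2) ^ s * exp (-(α / 2) * (n + 2) ^ 2)
        ≤ 2 ^ s * ∫ x in 1 + n..1 + n + 1, x ^ s * exp (-(α / 2) * x ^ 2) := by
      rw [show (n : ℝ) + 2 = 1 + n + 1 by ring]
      exact rpow_mul_exp_neg_mul_sq_le_two_rpow_mul_integral hs (half_pos hα).le (by simp)
    calc ((n : ℝ) + 2) ^ s * exp (-α * (n + 2) ^ 2)
        ≤ ((n : ℝ) + 2) ^ s * (exp (-α) * exp (-(α / 2) * (n + 2) ^ 2)) := by gcongr
      _ = exp (-α) * (((n : ℝ) + 2) ^ s * exp (-(α / 2) * (n + 2) ^ 2)) := by ring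
      _ ≤ _ := by gcongr
  calc ∑ n ∈ Finset.range N, ((n : ℝ) + 2) ^ s * exp (-α * (n + 2) ^ 2)
      ≤ ∑ n ∈ Finset.range N,
          exp (-α) * (2 ^ s * ∫ x in 1 + n..1 + n + 1, x ^ s * exp (-(α / 2) * x ^ 2)) :=
        Finset.sum_le_sum fun n _ => hterm n
    _ = exp (-α) * (2 ^ s * ∑ n ∈ Finset.range N,
          ∫ x in 1 + n..1 + n + 1, x ^ s * exp (-(α / 2) * x ^ 2)) := by
        simp only [Finset.mul_sum]
    _ ≤ _ := by
        gcongr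
        exact sum_range_intervalIntegral_le_integral_Ioi zero_le_one
          (integrableOn_rpow_mul_exp_neg_mul_sq (half_pos hα) (by linarith))
          (fun x hx => by have : 0 < x := hx; positivity) N

/-- For every `d ∈ ℕ` there exists `c' > 0` such that
`Σ_{n=2}^∞ n^{d/2} e^{-α n²} ≤ c' α^{-(d+2)/4} e^{-α}` uniformly for all `α > 0`. -/
theorem sum_pow_mul_exp_neg_sq_le (d : ℕ) :
    ∃ c' > (0 : ℝ), ∀ α : ℝ, 0 < α →
      (∑' n : ℕ, ((n + 2 : ℝ) ^ ((d : ℝ) / 2) * Real.exp (-α * (n + 2) ^ 2)))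
        ≤ c' * α ^ (-((d : ℝ) + 2) / 4) * Real.exp (-α) := by
  set s : ℝ := d / 2
  have hs : 0 ≤ s := by positivity
  refine ⟨2 ^ s * 2 ^ ((s + 1) / 2) * (1 / 2) * Gamma ((s + 1) / 2),
    by have := Gamma_pos_of_pos (by positivity : 0 < (s + 1) / 2); positivity, fun α hα => ?_⟩
  have hgamma := integral_rpow_mul_exp_neg_mul_rpow two_pos (by linarith : -1 < s) (half_pos hα)
  simp only [rpow_two] at hgamma
  have hscale : (α / 2) ^ (-(s + 1) / 2) = 2 ^ ((s + 1) / 2) * α ^ (-((d : ℝ) + 2) / 4) := by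
    rw [show -((d : ℝ) + 2) / 4 = -((s + 1) / 2) by ring, neg_div, div_rpow hα.le zero_le_two,
      rpow_neg zero_le_two, div_inv_eq_mul, mul_comm]
  refine (tsum_rpow_mul_exp_neg_mul_sq_le hs hα).trans_eq ?_
  rw [hgamma, hscale]
  ring
end

section
/- Let ℰ be a local Dirichlet form with energy measures σ_{ij}^{(φ₁,…,φ_n)} satisfying ℰ(F₀(φ₁,…,φ_n), G₀(φ₁,…,φ_n)) = Σ_{i,j} ∫ dσ_{ij} (∂F/∂x_i)(∂G/∂x_j) for F,G ∈ C¹(ℝⁿ), F₀ = F − F(0), G₀ = G − G(0). Then for all ψ, φ ∈ D(ℰ) ∩ L_∞(X;ℝ): ℰ(φ,φ) − ℰ(e^{−ψ}φ, e^{ψ}φ) = ℐ_ψ(φ²) where ℐ_ψ(φ²) = ℰ(ψφ²,ψ) − 2^{-1}ℰ(ψ²,φ²). -/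
/-!
Every function occurring in the identity is of the form `F(ψ, φ)` with `F(x, y) = f(x) g(y)`
vanishing at the origin, so the representation formula turns each energy into the four
numbers `σ_ij` applied to products of partial derivatives. After pulling out constants by
homogeneity of `σ_ij`, only the integrands `y²`, `y`, `1` and `xy` remain; in
`ℰ(e^{-ψ}φ, e^{ψ}φ)` the exponentials cancel because `e^{-x} e^{x} = 1`. Both sides then
equal `σ_11(y²)`, the `xy`-terms cancelling by `σ_12 = σ_21` (indices `0, 1` in Lean).
-/

/-- The `i`-th partial derivative of a `C¹` function on `ℝ²`. -/
noncomputable def partialDeriv2 (i : Fin 2) (F : ℝ × ℝ → ℝ) (p : ℝ × ℝ) : ℝ :=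
  fderiv ℝ F p (if i = 0 then ((1 : ℝ), (0 : ℝ)) else ((0 : ℝ), (1 : ℝ)))

section Homogeneous

variable {α : Type*} {L : (α → ℝ) → ℝ} (hL : ∀ (c : ℝ) u, L (c • u) = c * L u)
include hL

theorem map_mul_const_of_map_smul (u : α → ℝ) (c : ℝ) : L (fun a => u a * c) = L u * c := by
  rw [mul_comm, ← hL]
  simp only [Pi.smul_def, smul_eq_mul, mul_comm]

theorem map_neg_of_map_smul (u : α → ℝ) : L (fun a => -u a) = -L u := by
  rw [← neg_one_mul, ← hL]
  simp only [Pi.smul_def, smul_eq_mul, neg_one_mul]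

theorem map_zero_of_map_smul : L (fun _ => 0) = 0 := by
  simpa only [zero_smul, zero_mul, Pi.zero_def] using hL 0 0

end Homogeneous

section Separable

variable {f g : ℝ → ℝ} {p : ℝ × ℝ}

theorem fderiv_mul_fst_snd_apply (hf : DifferentiableAt ℝ f p.1)
    (hg : DifferentiableAt ℝ g p.2) (v : ℝ × ℝ) :
    fderiv ℝ (fun q : ℝ × ℝ => f q.1 * g q.2) p v
      = deriv f p.1 * g p.2 * v.1 + f p.1 * deriv g p.2 * v.2 := by
  have H : HasFDerivAt (fun q : ℝ × ℝ => f q.1 * g q.2) _ p :=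
    (hf.hasDerivAt.comp_hasFDerivAt p (hasFDerivAt_fst (𝕜 := ℝ) (p := p))).mul
      (hg.hasDerivAt.comp_hasFDerivAt p (hasFDerivAt_snd (𝕜 := ℝ) (p := p)))
  simp only [H.fderiv, Function.comp_apply, add_apply, smul_apply, ContinuousLinearMap.coe_fst',
    ContinuousLinearMap.coe_snd', smul_eq_mul]
  ring

theorem partialDeriv2_zero_mul (hf : DifferentiableAt ℝ f p.1) (hg : DifferentiableAt ℝ g p.2) :
    partialDeriv2 0 (fun q => f q.1 * g q.2) p = deriv f p.1 * g p.2 := by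
  simp [partialDeriv2, fderiv_mul_fst_snd_apply hf hg]

theorem partialDeriv2_one_mul (hf : DifferentiableAt ℝ f p.1) (hg : DifferentiableAt ℝ g p.2) :
    partialDeriv2 1 (fun q => f q.1 * g q.2) p = f p.1 * deriv g p.2 := by
  simp [partialDeriv2, fderiv_mul_fst_snd_apply hf hg]

end Separable

section Energy

open Real

variable {X : Type*} {E : (X → ℝ) → (X → ℝ) → ℝ} {ψ φ : X → ℝ}
  {σ : Fin 2 → Fin 2 → ((ℝ × ℝ) → ℝ) → ℝ}
  (hrep : ∀ F G : ℝ × ℝ → ℝ, ContDiff ℝ 1 F → ContDiff ℝ 1 G →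
      E (fun x => F (ψ x, φ x) - F (0, 0)) (fun x => G (ψ x, φ x) - G (0, 0))
        = ∑ i : Fin 2, ∑ j : Fin 2,
            σ i j (fun p => partialDeriv2 i F p * partialDeriv2 j G p))
include hrep

theorem energy_mul_mul_eq {f g h k : ℝ → ℝ} (hf : ContDiff ℝ 1 f) (hg : ContDiff ℝ 1 g)
    (hh : ContDiff ℝ 1 h) (hk : ContDiff ℝ 1 k) (hfg : f 0 * g 0 = 0) (hhk : h 0 * k 0 = 0) :
    E (fun x => f (ψ x) * g (φ x)) (fun x => h (ψ x) * k (φ x))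
      = σ 0 0 (fun p => deriv f p.1 * deriv h p.1 * (g p.2 * k p.2))
        + σ 0 1 (fun p => deriv f p.1 * h p.1 * (g p.2 * deriv k p.2))
        + σ 1 0 (fun p => f p.1 * deriv h p.1 * (deriv g p.2 * k p.2))
        + σ 1 1 (fun p => f p.1 * h p.1 * (deriv g p.2 * deriv k p.2)) := by
  have H := hrep (fun q => f q.1 * g q.2) (fun q => h q.1 * k q.2) (by fun_prop) (by fun_prop)
  simp only [hfg, hhk, sub_zero, Fin.sum_univ_two] at H
  simp only [H, partialDeriv2_zero_mul, partialDeriv2_one_mul, (hf.differentiable one_ne_zero) _,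
    (hg.differentiable one_ne_zero) _, (hh.differentiable one_ne_zero) _,
    (hk.differentiable one_ne_zero) _, ← add_assoc,
    mul_mul_mul_comm _ (g _), mul_mul_mul_comm _ (deriv g _)]

variable (hσ : ∀ i j (c : ℝ) u, σ i j (c • u) = c * σ i j u)
include hσ

theorem energy_self_eq : E φ φ = σ 1 1 1 := by
  have H := energy_mul_mul_eq hrep (f := fun _ => 1) (g := id) (h := fun _ => 1) (k := id)
    (by fun_prop) (by fun_prop) (by fun_prop) (by fun_prop) (by simp) (by simp)
  simp only [deriv_const', deriv_id, id, mul_zero, zero_mul, mul_one,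
    map_zero_of_map_smul (hσ _ _), zero_add, one_mul] at H
  exact H

theorem energy_exp_neg_mul_exp_mul_eq :
    E (fun x => exp (-ψ x) * φ x) (fun x => exp (ψ x) * φ x)
      = σ 1 1 1 + σ 1 0 Prod.snd - σ 0 1 Prod.snd - σ 0 0 (fun p => p.2 ^ 2) := by
  have H := energy_mul_mul_eq hrep (f := fun t => exp (-t)) (g := id) (h := exp) (k := id)
    (by fun_prop) (by fun_prop) (by fun_prop) (by fun_prop) (by simp) (by simp)
  simp only [deriv_comp_neg, Real.deriv_exp, deriv_id, id, neg_mul, ← exp_add, neg_add_cancel,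
    exp_zero, one_mul, mul_one, map_neg_of_map_smul (hσ _ _)] at H
  ring_nf at H ⊢
  linear_combination H

theorem energy_mul_sq_eq : E (fun x => ψ x * φ x ^ 2) ψ
    = σ 0 0 (fun p => p.2 ^ 2) + σ 1 0 (fun p => p.1 * p.2) * 2 := by
  have H := energy_mul_mul_eq hrep (f := id) (g := fun t => t ^ 2) (h := id) (k := fun _ => 1)
    (by fun_prop) (by fun_prop) (by fun_prop) (by fun_prop) (by simp) (by simp)
  simp only [id, deriv_id, deriv_id'', deriv_const', deriv_fun_pow, differentiableAt_fun_id,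
    Nat.cast_ofNat, Nat.add_one_sub_one, pow_one, mul_one, one_mul, mul_zero, add_zero,
    map_zero_of_map_smul (hσ _ _)] at H
  ring_nf at H
  simp only [map_mul_const_of_map_smul (hσ _ _)] at H
  exact H

theorem energy_sq_sq_eq : E (fun x => ψ x ^ 2) (fun x => φ x ^ 2)
    = σ 0 1 (fun p => p.1 * p.2) * 4 := by
  have H := energy_mul_mul_eq hrep (f := fun t => t ^ 2) (g := fun _ => 1) (h := fun _ => 1)
    (k := fun t => t ^ 2)
    (by fun_prop) (by fun_prop) (by fun_prop) (by fun_prop) (by simp) (by simp)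
  simp only [deriv_id'', deriv_const', deriv_fun_pow, differentiableAt_fun_id, Nat.cast_ofNat,
    Nat.add_one_sub_one, pow_one, mul_one, one_mul, mul_zero, zero_mul, add_zero, zero_add,
    map_zero_of_map_smul (hσ _ _)] at H
  ring_nf at H
  simp only [map_mul_const_of_map_smul (hσ _ _)] at H
  exact H

end Energy

theorem energy_exp_perturbation_general {X : Type*}
    (E : (X → ℝ) → (X → ℝ) → ℝ) (ψ φ : X → ℝ)
    (σ : Fin 2 → Fin 2 → ((ℝ × ℝ) → ℝ) → ℝ)
    (hσsmul : ∀ i j (c : ℝ) f, σ i j (c • f) = c * σ i j f)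
    (hσsymm : ∀ f, σ 0 1 f = σ 1 0 f)
    (hrep : ∀ F G : ℝ × ℝ → ℝ, ContDiff ℝ 1 F → ContDiff ℝ 1 G →
      E (fun x => F (ψ x, φ x) - F (0, 0)) (fun x => G (ψ x, φ x) - G (0, 0))
        = ∑ i : Fin 2, ∑ j : Fin 2,
            σ i j (fun p => partialDeriv2 i F p * partialDeriv2 j G p)) :
    E φ φ - E (fun x => Real.exp (-ψ x) * φ x) (fun x => Real.exp (ψ x) * φ x)
      = E (fun x => ψ x * φ x ^ 2) ψ
        - 2⁻¹ * E (fun x => ψ x ^ 2) (fun x => φ x ^ 2) := by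
  rw [energy_self_eq hrep hσsmul, energy_exp_neg_mul_exp_mul_eq hrep hσsmul,
    energy_mul_sq_eq hrep hσsmul, energy_sq_sq_eq hrep hσsmul, hσsymm, hσsymm]
  ring

/-- Let `ℰ` be a local Dirichlet form with energy measures
`σ_{ij} = σ_{ij}^{(ψ,φ)}` (encoded here as the linear integration functionals
`σ i j : (ℝ×ℝ → ℝ) → ℝ`, with `σ_{12} = σ_{21}`) satisfying the representation
`ℰ(F₀(ψ,φ), G₀(ψ,φ)) = Σ_{i,j} ∫ dσ_{ij} (∂F/∂x_i)(∂G/∂x_j)` for all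
`F, G ∈ C¹(ℝ²)`, `F₀ = F − F(0)`, `G₀ = G − G(0)`. Then for `ψ, φ ∈ D(ℰ) ∩ L_∞(X;ℝ)`:
`ℰ(φ,φ) − ℰ(e^{−ψ}φ, e^{ψ}φ) = ℐ_ψ(φ²) = ℰ(ψφ²,ψ) − 2⁻¹ℰ(ψ²,φ²)`. -/
theorem energy_exp_perturbation {X : Type*}
    (E : (X → ℝ) → (X → ℝ) → ℝ) (ψ φ : X → ℝ)
    (hψb : ∃ M, ∀ x, |ψ x| ≤ M) (hφb : ∃ M, ∀ x, |φ x| ≤ M)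
    (σ : Fin 2 → Fin 2 → ((ℝ × ℝ) → ℝ) → ℝ)
    (hσadd : ∀ i j f g, σ i j (f + g) = σ i j f + σ i j g)
    (hσsmul : ∀ i j (c : ℝ) f, σ i j (c • f) = c * σ i j f)
    (hσsymm : ∀ f, σ 0 1 f = σ 1 0 f)
    (hrep : ∀ F G : ℝ × ℝ → ℝ, ContDiff ℝ 1 F → ContDiff ℝ 1 G →
      E (fun x => F (ψ x, φ x) - F (0, 0)) (fun x => G (ψ x, φ x) - G (0, 0))
        = ∑ i : Fin 2, ∑ j : Fin 2,
            σ i j (fun p => partialDeriv2 i F p * partialDeriv2 j G p)) :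
    E φ φ - E (fun x => Real.exp (-ψ x) * φ x) (fun x => Real.exp (ψ x) * φ x)
      = E (fun x => ψ x * φ x ^ 2) ψ
        - 2⁻¹ * E (fun x => ψ x ^ 2) (fun x => φ x ^ 2) :=
  energy_exp_perturbation_general E ψ φ σ hσsmul hσsymm hrep
end

section
/- Let ℰ be a local Dirichlet form on L₂(X) with 𝟙 ∈ D(ℰ)_loc, D(ℰ) ∩ L_{∞,c}(X) a core for ℰ, and let S be the semigroup generated by the associated self-adjoint operator H. Suppose A ⊆ X is measurable with 𝟙_A ∈ D(ℰ)_loc and |||Î_{𝟙_A}||| ≤ δ^{-2} < ∞ for some δ > 0, and suppose the off-diagonal bound |(φ₁, S_t φ₂)| ≤ e^{-δ²/t} ‖φ₁‖₂‖φ₂‖₂ holds for all t > 0, φ₁ ∈ L₂(A), φ₂ ∈ L₂(A^c). Then ℰ(𝟙_A φ, 𝟙_{A^c} φ) = 0 and ℰ(φ) = ℰ(𝟙_A φ) + ℰ(𝟙_{A^c} φ) for all φ ∈ D(ℰ) with 𝟙_A φ ∈ D(ℰ). -/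
open MeasureTheory ENNReal

/-- A bounded (real-valued) function. -/
def BddFun {X : Type*} (ψ : X → ℝ) : Prop := ∃ M, ∀ x, |ψ x| ≤ M

/-- `D(ℰ)_loc`: functions agreeing on every compact set with a member of the domain. -/
def DirLoc {X : Type*} [TopologicalSpace X] (D : Set (X → ℝ)) : Set (X → ℝ) :=
  {ψ | ∀ K : Set X, IsCompact K → ∃ ψ' ∈ D, ∀ x ∈ K, ψ x = ψ' x}

/-- Membership in `L_{∞,c}(X;ℝ)`: bounded with compact support. -/
def MemLinfc {X : Type*} [TopologicalSpace X] (φ : X → ℝ) : Prop :=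
  BddFun φ ∧ HasCompactSupport φ

/-- The truncated form `ℐ_ψ(φ) = ℰ(ψφ,ψ) − 2⁻¹ℰ(ψ²,φ)`. -/
noncomputable def truncI {X : Type*} (E : (X → ℝ) → (X → ℝ) → ℝ) (ψ φ : X → ℝ) : ℝ :=
  E (fun x => ψ x * φ x) ψ - 2⁻¹ * E (fun x => ψ x * ψ x) φ

open Classical in
/-- The localised truncated form `Î_ψ(φ) = ℐ_{ψ̂}(φ)` where `ψ̂ ∈ D(ℰ) ∩ L_∞` agrees
with `ψ` on the support of `φ` (well defined for local forms). -/
noncomputable def truncIhat {X : Type*} [TopologicalSpace X]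
    (E : (X → ℝ) → (X → ℝ) → ℝ) (D : Set (X → ℝ)) (ψ φ : X → ℝ) : ℝ :=
  if h : ∃ ψ', ψ' ∈ D ∧ BddFun ψ' ∧ ∀ x ∈ tsupport φ, ψ x = ψ' x
  then truncI E h.choose φ else 0

/-- The norm `|||Î_ψ||| = sup{|Î_ψ(φ)| : φ ∈ D(ℰ) ∩ L_{∞,c}(X;ℝ), ‖φ‖₁ ≤ 1}`. -/
noncomputable def truncNorm {X : Type*} [TopologicalSpace X] [MeasurableSpace X]
    (E : (X → ℝ) → (X → ℝ) → ℝ) (D : Set (X → ℝ)) (μ : Measure X)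
    (ψ : X → ℝ) : ℝ≥0∞ :=
  ⨆ (φ : X → ℝ) (_ : φ ∈ D) (_ : MemLinfc φ) (_ : eLpNorm φ 1 μ ≤ 1),
    ENNReal.ofReal |truncIhat E D ψ φ|

/-- `D₀(ℰ) = {ψ ∈ D(ℰ)_loc ∩ L_∞(X;ℝ) : |||Î_ψ||| ≤ 1}`. -/
def D0 {X : Type*} [TopologicalSpace X] [MeasurableSpace X]
    (E : (X → ℝ) → (X → ℝ) → ℝ) (D : Set (X → ℝ)) (μ : Measure X) :
    Set (X → ℝ) :=
  {ψ | ψ ∈ DirLoc D ∧ BddFun ψ ∧ truncNorm E D μ ψ ≤ 1}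

/-- `d_ψ(A;B) = ess inf_A ψ − ess sup_B ψ ∈ (−∞,∞]`, computed in `EReal` so that the
conventions for null sets match those of the paper. -/
noncomputable def dFun {X : Type*} [MeasurableSpace X] (μ : Measure X)
    (ψ : X → ℝ) (A B : Set X) : EReal :=
  essInf (fun x => (ψ x : EReal)) (μ.restrict A)
    - essSup (fun x => (ψ x : EReal)) (μ.restrict B)

/-- The set-theoretic distance `d(A;B) = sup{d_ψ(A;B) : ψ ∈ D₀(ℰ)} ∈ [0,∞]`. -/
noncomputable def setDist {X : Type*} [TopologicalSpace X] [MeasurableSpace X]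
    (E : (X → ℝ) → (X → ℝ) → ℝ) (D : Set (X → ℝ)) (μ : Measure X)
    (A B : Set X) : ℝ≥0∞ :=
  ⨆ (ψ : X → ℝ) (_ : ψ ∈ D0 E D μ) (M : ℝ) (_ : (M : EReal) ≤ dFun μ ψ A B),
    ENNReal.ofReal M

/-!
Write `u = 𝟙_A φ` and `v = 𝟙_{A^c} φ = φ - u ∈ D(ℰ)`. Since `u v = 0` pointwise,
`t⁻¹ (u, (I - S_t) v) = -t⁻¹ (u, S_t v)`, and the off-diagonal bound makes this
`O(t⁻¹ e^{-δ²/t}) → 0` as `t ↓ 0`; hence `ℰ(u, v) = 0`, and `ℰ(φ) = ℰ(u + v)` splits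
by bilinearity and symmetry.
-/

open Filter Topology

theorem tendsto_inv_mul_exp_neg_div_nhdsGT_zero {c : ℝ} (hc : 0 < c) :
    Tendsto (fun t : ℝ => t⁻¹ * Real.exp (-c / t)) (𝓝[>] 0) (𝓝 0) := by
  have hdiv : Tendsto (fun t : ℝ => c / t) (𝓝[>] 0) atTop := by
    simpa only [div_eq_mul_inv] using tendsto_inv_nhdsGT_zero.const_mul_atTop hc
  have hexp : Tendsto (fun x : ℝ => x * Real.exp (-x)) atTop (𝓝 0) := by
    simpa using Real.tendsto_pow_mul_exp_neg_atTop_nhds_zero 1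
  have := (hexp.comp hdiv).const_mul c⁻¹
  rw [mul_zero] at this
  refine this.congr fun t => ?_
  simp only [Function.comp_apply, neg_div]
  field_simp

theorem eq_zero_of_tendsto_inv_mul_of_abs_le_exp {g : ℝ → ℝ} {a c C : ℝ} (hc : 0 < c)
    (hlim : Tendsto (fun t => t⁻¹ * g t) (𝓝[>] 0) (𝓝 a))
    (hg : ∀ t > 0, |g t| ≤ Real.exp (-c / t) * C) : a = 0 := by
  have hdecay := (tendsto_inv_mul_exp_neg_div_nhdsGT_zero hc).mul_const C
  rw [zero_mul] at hdecay
  refine tendsto_nhds_unique hlim (squeeze_zero_norm' ?_ hdecay)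
  filter_upwards [self_mem_nhdsWithin] with t (ht : 0 < t)
  rw [Real.norm_eq_abs, abs_mul, abs_of_pos (inv_pos.mpr ht), mul_assoc]
  exact mul_le_mul_of_nonneg_left (hg t ht) (inv_nonneg.mpr ht.le)

theorem Set.indicator_mul_compl_indicator {α R : Type*} [MulZeroClass R] (s : Set α)
    (f : α → R) (x : α) : s.indicator f x * sᶜ.indicator f x = 0 := by
  by_cases hx : x ∈ s <;> simp [hx]

theorem form_self_add_eq_of_orthogonal {M : Type*} [Add M] (E : M → M → ℝ)
    (hsymm : ∀ f g, E f g = E g f) (haddl : ∀ f g h, E (f + g) h = E f h + E g h)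
    {u v : M} (huv : E u v = 0) : E (u + v) (u + v) = E u u + E v v := by
  have hvu : E v u = 0 := hsymm u v ▸ huv
  rw [haddl, hsymm u, hsymm v, haddl, haddl, huv, hvu]
  ring

theorem form_splits_of_offdiagonal_bound_general {X : Type*}
    [MeasurableSpace X] (μ : Measure X)
    (D : Set (X → ℝ)) (E : (X → ℝ) → (X → ℝ) → ℝ)
    (S : ℝ → (X → ℝ) → (X → ℝ))
    (hsymm : ∀ f g, E f g = E g f)
    (haddl : ∀ f g h, E (f + g) h = E f h + E g h)
    (hDsub : ∀ f ∈ D, ∀ g ∈ D, f - g ∈ D)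
    (hD2 : ∀ f ∈ D, MemLp f 2 μ)
    (hlim : ∀ u ∈ D, ∀ v ∈ D,
      Tendsto (fun t : ℝ => t⁻¹ * ∫ x, u x * (v x - S t v x) ∂μ)
        (nhdsWithin 0 (Set.Ioi 0)) (nhds (E u v)))
    (A : Set X)
    (δ : ℝ) (hδ : 0 < δ)
    (hbound : ∀ t : ℝ, 0 < t → ∀ φ₁ φ₂ : X → ℝ,
      MemLp φ₁ 2 μ → (∀ᵐ x ∂μ, x ∉ A → φ₁ x = 0) →
      MemLp φ₂ 2 μ → (∀ᵐ x ∂μ, x ∈ A → φ₂ x = 0) →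
      |∫ x, φ₁ x * S t φ₂ x ∂μ|
        ≤ Real.exp (-δ ^ 2 / t) * (eLpNorm φ₁ 2 μ).toReal
            * (eLpNorm φ₂ 2 μ).toReal)
    (φ : X → ℝ) (hφ : φ ∈ D) (hφA : A.indicator φ ∈ D) :
    E (A.indicator φ) (Aᶜ.indicator φ) = 0 ∧
      E φ φ = E (A.indicator φ) (A.indicator φ)
        + E (Aᶜ.indicator φ) (Aᶜ.indicator φ) := by
  have hcD : Aᶜ.indicator φ ∈ D := Set.indicator_compl A φ ▸ hDsub φ hφ _ hφA
  have horth : E (A.indicator φ) (Aᶜ.indicator φ) = 0 := by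
    refine eq_zero_of_tendsto_inv_mul_of_abs_le_exp (pow_pos hδ 2) (hlim _ hφA _ hcD)
      (C := (eLpNorm (A.indicator φ) 2 μ).toReal * (eLpNorm (Aᶜ.indicator φ) 2 μ).toReal)
      fun t ht => ?_
    have hsplit : (fun x => A.indicator φ x * (Aᶜ.indicator φ x - S t (Aᶜ.indicator φ) x))
        = fun x => -(A.indicator φ x * S t (Aᶜ.indicator φ) x) := by
      funext x
      linear_combination A.indicator_mul_compl_indicator φ x
    rw [hsplit, integral_neg, abs_neg]
    refine (hbound t ht _ _ (hD2 _ hφA) (.of_forall fun x hx => by simp [hx]) (hD2 _ hcD)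
      (.of_forall fun x hx => by simp [hx])).trans_eq (mul_assoc _ _ _)
  refine ⟨horth, ?_⟩
  rw [← form_self_add_eq_of_orthogonal E hsymm haddl horth, Set.indicator_self_add_compl]

/-- Let `ℰ` be a local Dirichlet form on `L₂(X)` with `𝟙 ∈ D(ℰ)_loc` and
`D(ℰ) ∩ L_{∞,c}(X)` a core, and `S` the semigroup generated by the associated
self-adjoint operator `H` (encoded via `ℰ(u,v) = lim_{t↓0} t⁻¹(u, (I−S_t)v)`).
Suppose `A ⊆ X` is measurable with `𝟙_A ∈ D(ℰ)_loc`, `|||Î_{𝟙_A}||| ≤ δ⁻² < ∞`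
for some `δ > 0`, and the off-diagonal bound
`|(φ₁, S_tφ₂)| ≤ e^{-δ²/t}‖φ₁‖₂‖φ₂‖₂` holds for `φ₁ ∈ L₂(A)`, `φ₂ ∈ L₂(A^c)`.
Then for all `φ ∈ D(ℰ)` with `𝟙_Aφ ∈ D(ℰ)`:
`ℰ(𝟙_Aφ, 𝟙_{A^c}φ) = 0` and `ℰ(φ) = ℰ(𝟙_Aφ) + ℰ(𝟙_{A^c}φ)`. -/
theorem form_splits_of_offdiagonal_bound {X : Type*} [TopologicalSpace X]
    [MeasurableSpace X] (μ : Measure X)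
    (D : Set (X → ℝ)) (E : (X → ℝ) → (X → ℝ) → ℝ)
    (S : ℝ → (X → ℝ) → (X → ℝ))
    (hsymm : ∀ f g, E f g = E g f)
    (haddl : ∀ f g h, E (f + g) h = E f h + E g h)
    (hsmull : ∀ (c : ℝ) (f g : X → ℝ), E (c • f) g = c * E f g)
    (hDsub : ∀ f ∈ D, ∀ g ∈ D, f - g ∈ D)
    (hD2 : ∀ f ∈ D, MemLp f 2 μ)
    (h1loc : (fun _ : X => (1 : ℝ)) ∈ DirLoc D)
    (hcore : ∀ f ∈ D, ∀ ε > (0 : ℝ), ∃ g ∈ D, MemLinfc g ∧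
      E (f - g) (f - g) + ((eLpNorm (f - g) 2 μ).toReal) ^ 2 < ε)
    (hlim : ∀ u ∈ D, ∀ v ∈ D,
      Tendsto (fun t : ℝ => t⁻¹ * ∫ x, u x * (v x - S t v x) ∂μ)
        (nhdsWithin 0 (Set.Ioi 0)) (nhds (E u v)))
    (A : Set X) (hA : MeasurableSet A)
    (δ : ℝ) (hδ : 0 < δ)
    (hAloc : A.indicator (fun _ => (1 : ℝ)) ∈ DirLoc D)
    (hTN : truncNorm E D μ (A.indicator fun _ => (1 : ℝ))
      ≤ ENNReal.ofReal (δ⁻¹ ^ 2))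
    (hbound : ∀ t : ℝ, 0 < t → ∀ φ₁ φ₂ : X → ℝ,
      MemLp φ₁ 2 μ → (∀ᵐ x ∂μ, x ∉ A → φ₁ x = 0) →
      MemLp φ₂ 2 μ → (∀ᵐ x ∂μ, x ∈ A → φ₂ x = 0) →
      |∫ x, φ₁ x * S t φ₂ x ∂μ|
        ≤ Real.exp (-δ ^ 2 / t) * (eLpNorm φ₁ 2 μ).toReal
            * (eLpNorm φ₂ 2 μ).toReal)
    (φ : X → ℝ) (hφ : φ ∈ D) (hφA : A.indicator φ ∈ D) :
    E (A.indicator φ) (Aᶜ.indicator φ) = 0 ∧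
      E φ φ = E (A.indicator φ) (A.indicator φ)
        + E (Aᶜ.indicator φ) (Aᶜ.indicator φ) :=
  form_splits_of_offdiagonal_bound_general μ D E S hsymm haddl hDsub hD2 hlim A δ hδ hbound φ hφ hφA
end
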